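/- arXiv:0907.2954 — 5 statements merged into one kernel-verified Lean document; each statement's English description precedes it below -/
import Mathlib

section
/- Let K be a minimal finite simplicial complex and let φ : K → K be a simplicial map that lies in the same contiguity class as the identity map of K. Then φ is the identity map. -/
/- Theory of strong homotopy types of finite simplicial complexes
   (Barmak–Minian), basic definitions. -/

open Classical

namespace StrongHomotopy

/-- A finite abstract simplicial complex with vertices from the ambient type `V`:
a finite family of nonempty finite subsets of `V`, closed under nonempty subsets.
(All singletons of vertices actually used are faces, by downward closure.) -/
structure Cplx (V : Type) where
  faces : Finset (Finset V)
  nonempty_of_mem : ∀ ⦃σ : Finset V⦄, σ ∈ faces → σ.Nonempty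
  down_closed : ∀ ⦃σ τ : Finset V⦄, σ ∈ faces → τ ⊆ σ → τ.Nonempty → τ ∈ faces

variable {V W : Type}

/-- `v` is a vertex of `K`. -/
def IsVertex (K : Cplx V) (v : V) : Prop := {v} ∈ K.faces

noncomputable section

/-- The set of faces of the link of `v` in `K`. -/
def link (K : Cplx V) (v : V) : Finset (Finset V) :=
  K.faces.filter fun σ => v ∉ σ ∧ insert v σ ∈ K.faces

/-- A family of faces is a simplicial cone with apex `a`. -/
def IsConeWithApex (F : Finset (Finset V)) (a : V) : Prop :=
  {a} ∈ F ∧ ∀ σ ∈ F, insert a σ ∈ F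

/-- A family of faces is a simplicial cone. -/
def IsCone (F : Finset (Finset V)) : Prop := ∃ a, IsConeWithApex F a

/-- `v` is dominated by `v'` in `K`: the link of `v` is a cone with apex `v'`. -/
def DominatedBy (K : Cplx V) (v v' : V) : Prop := IsConeWithApex (link K v) v'

/-- `v` is a dominated vertex of `K`: its link is a simplicial cone. -/
def Dominated (K : Cplx V) (v : V) : Prop := IsCone (link K v)

/-- Deletion `K ∖ v`: the full subcomplex spanned by the vertices other than `v`. -/
def delete (K : Cplx V) (v : V) : Cplx V where
  faces := K.faces.filter fun σ => v ∉ σ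
  nonempty_of_mem := fun σ h => K.nonempty_of_mem (Finset.mem_filter.mp h).1
  down_closed := by
    intro σ τ hσ hsub hne
    rw [Finset.mem_filter] at hσ ⊢
    exact ⟨K.down_closed hσ.1 hsub hne, fun hv => hσ.2 (hsub hv)⟩

/-- The link of a vertex, as a simplicial complex. -/
def linkCplx (K : Cplx V) (v : V) : Cplx V where
  faces := link K v
  nonempty_of_mem := fun σ h => K.nonempty_of_mem (Finset.mem_filter.mp h).1
  down_closed := by
    intro σ τ hσ hsub hne
    simp only [link, Finset.mem_filter] at hσ ⊢
    refine ⟨K.down_closed hσ.1 hsub hne, fun hv => hσ.2.1 (hsub hv), ?_⟩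
    exact K.down_closed hσ.2.2 (Finset.insert_subset_insert v hsub)
      ⟨v, Finset.mem_insert_self v τ⟩

/-- Elementary strong collapse: deletion of a dominated vertex. -/
def ElemStrongCollapse (K L : Cplx V) : Prop := ∃ v, Dominated K v ∧ L = delete K v

/-- `K` strong collapses to `L` (a sequence of elementary strong collapses). -/
def StrongCollapses : Cplx V → Cplx V → Prop := Relation.ReflTransGen ElemStrongCollapse

/-- The complex with a single vertex `v`. -/
def pt (v : V) : Cplx V where
  faces := {{v}}
  nonempty_of_mem := by
    intro σ h
    rw [Finset.mem_singleton] at h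
    subst h
    exact ⟨v, Finset.mem_singleton_self v⟩
  down_closed := by
    intro σ τ hσ hsub hne
    rw [Finset.mem_singleton] at hσ ⊢
    subst hσ
    rcases Finset.subset_singleton_iff.mp hsub with h | h
    · exact absurd h (Finset.nonempty_iff_ne_empty.mp hne)
    · exact h

/-- `K` is strong collapsible: it strong collapses to a single vertex. -/
def StrongCollapsible (K : Cplx V) : Prop := ∃ v, StrongCollapses K (pt v)

/-- A minimal complex: no dominated vertices. -/
def MinimalCplx (K : Cplx V) : Prop := ∀ v, ¬ Dominated K v

/-- A vertex map is simplicial if it sends faces to faces. -/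
def IsSimplicial (K : Cplx V) (L : Cplx W) (f : V → W) : Prop :=
  ∀ σ ∈ K.faces, σ.image f ∈ L.faces

/-- Two vertex maps are contiguous. -/
def Contiguous (K : Cplx V) (L : Cplx W) (f g : V → W) : Prop :=
  ∀ σ ∈ K.faces, σ.image f ∪ σ.image g ∈ L.faces

/-- `f` and `g` lie in the same contiguity class: they are joined by
a finite chain of (pairwise contiguous) maps. -/
def ContigClass (K : Cplx V) (L : Cplx W) : (V → W) → (V → W) → Prop :=
  Relation.ReflTransGen (Contiguous K L)

/-- A strong equivalence of simplicial complexes. -/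
def StrongEquiv (K : Cplx V) (L : Cplx W) (f : V → W) : Prop :=
  IsSimplicial K L f ∧ ∃ g : W → V, IsSimplicial L K g ∧
    ContigClass K K (g ∘ f) id ∧ ContigClass L L (f ∘ g) id

/-- `f` is a simplicial isomorphism from `K` to `L`: a simplicial map,
injective on vertices, inducing a bijection on faces. -/
def IsIsoMap (K : Cplx V) (L : Cplx W) (f : V → W) : Prop :=
  IsSimplicial K L f ∧ Set.InjOn f {v | IsVertex K v} ∧
    K.faces.image (fun σ => σ.image f) = L.faces

/-- `K` and `L` are simplicially isomorphic. -/
def Isomorphic (K : Cplx V) (L : Cplx W) : Prop := ∃ f, IsIsoMap K L f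

/-- `L` is a subcomplex of `K`. -/
def Subcplx (L K : Cplx V) : Prop := L.faces ⊆ K.faces

/-- `L` is a full subcomplex of `K`. -/
def IsFullSub (L K : Cplx V) : Prop :=
  L.faces ⊆ K.faces ∧ ∀ σ ∈ K.faces, (∀ v ∈ σ, IsVertex L v) → σ ∈ L.faces

/-- `K₀` is a core of `K`: a minimal complex to which `K` strong collapses. -/
def IsCore (K K₀ : Cplx V) : Prop := MinimalCplx K₀ ∧ StrongCollapses K K₀

/-- Same strong homotopy type: joined by a finite sequence of strong collapses,
strong expansions and simplicial isomorphisms. (In the abstract setting, where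
new vertices may be created freely, isomorphisms are generated by collapses and
expansions; over a fixed ambient vertex type they must be added as moves.) -/
def SameSHT (K L : Cplx V) : Prop :=
  Relation.ReflTransGen
    (fun A B => ElemStrongCollapse A B ∨ ElemStrongCollapse B A ∨ Isomorphic A B) K L

/-- `K` is vertex-homogeneous: its automorphism group acts transitively on vertices. -/
def VertexHomog (K : Cplx V) : Prop :=
  ∀ v w, IsVertex K v → IsVertex K w → ∃ φ : V → V, IsIsoMap K K φ ∧ φ v = w

/-! ### The nerve -/

/-- The maximal faces of `K`. -/
def maxFaces (K : Cplx V) : Finset (Finset V) :=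
  K.faces.filter fun σ => ∀ τ ∈ K.faces, σ ⊆ τ → σ = τ

/-- The nerve of `K`: vertices are the maximal simplices of `K`; a nonempty set
of maximal simplices is a face iff the simplices have a common vertex. -/
def nerve (K : Cplx V) : Cplx (Finset V) where
  faces := (maxFaces K).powerset.filter fun S => S.Nonempty ∧ ∃ v, ∀ σ ∈ S, v ∈ σ
  nonempty_of_mem := fun S h => (Finset.mem_filter.mp h).2.1
  down_closed := by
    intro S T hS hsub hne
    rw [Finset.mem_filter, Finset.mem_powerset] at hS ⊢
    obtain ⟨hpow, -, v, hv⟩ := hS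
    exact ⟨hsub.trans hpow, hne, v, fun σ hσ => hv σ (hsub hσ)⟩

/-- Iterated ambient vertex types for iterated nerves. -/
def iterV (V : Type) : ℕ → Type := fun n => Nat.rec V (fun _ T => Finset T) n

/-- The iterated nerve `Nⁿ(K)` (with `N⁰(K) = K`). -/
def iterNerve (K : Cplx V) : (n : ℕ) → Cplx (iterV V n)
  | 0 => K
  | n + 1 => nerve (iterNerve K n)

/-- A complex consists of a single vertex. -/
def IsPoint (K : Cplx V) : Prop := ∃ v, K.faces = {{v}}

/-! ### Joins -/

/-- The left part of a set of vertices of `V ⊕ W`. -/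
def lefts (ρ : Finset (V ⊕ W)) : Finset V :=
  ρ.preimage Sum.inl Sum.inl_injective.injOn

/-- The right part of a set of vertices of `V ⊕ W`. -/
def rights (ρ : Finset (V ⊕ W)) : Finset W :=
  ρ.preimage Sum.inr Sum.inr_injective.injOn

lemma lefts_union_rights (ρ : Finset (V ⊕ W)) :
    (lefts ρ).image Sum.inl ∪ (rights ρ).image Sum.inr = ρ := by
  ext x
  cases x with
  | inl v => simp [lefts, rights]
  | inr w => simp [lefts, rights]

lemma lefts_eq (σ : Finset V) (τ : Finset W) :
    lefts (σ.image Sum.inl ∪ τ.image Sum.inr) = σ := by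
  ext v; simp [lefts]

lemma rights_eq (σ : Finset V) (τ : Finset W) :
    rights (σ.image Sum.inl ∪ τ.image Sum.inr) = τ := by
  ext w; simp [rights]

/-- The faces of the join `K * L`. -/
def joinFaces (K : Cplx V) (L : Cplx W) : Finset (Finset (V ⊕ W)) :=
  (((insert ∅ K.faces) ×ˢ (insert ∅ L.faces)).image
    (fun p => p.1.image Sum.inl ∪ p.2.image Sum.inr)).erase ∅

lemma mem_joinFaces {K : Cplx V} {L : Cplx W} {ρ : Finset (V ⊕ W)} :
    ρ ∈ joinFaces K L ↔
      ρ.Nonempty ∧ lefts ρ ∈ insert ∅ K.faces ∧ rights ρ ∈ insert ∅ L.faces := by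
  unfold joinFaces
  constructor
  · intro h
    have hne : ρ ≠ ∅ := Finset.ne_of_mem_erase h
    have h' := Finset.mem_of_mem_erase h
    rw [Finset.mem_image] at h'
    obtain ⟨p, hp, hρ⟩ := h'
    rw [Finset.mem_product] at hp
    subst hρ
    rw [lefts_eq, rights_eq]
    exact ⟨Finset.nonempty_iff_ne_empty.mpr hne, hp.1, hp.2⟩
  · rintro ⟨hne, hl, hr⟩
    apply Finset.mem_erase.mpr
    refine ⟨Finset.nonempty_iff_ne_empty.mp hne, ?_⟩
    rw [Finset.mem_image]
    exact ⟨(lefts ρ, rights ρ), Finset.mem_product.mpr ⟨hl, hr⟩, lefts_union_rights ρ⟩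

/-- The simplicial join `K * L` of complexes with disjoint vertex sets
(realized on the disjoint sum of the ambient types). -/
def join (K : Cplx V) (L : Cplx W) : Cplx (V ⊕ W) where
  faces := joinFaces K L
  nonempty_of_mem := fun ρ h => (mem_joinFaces.mp h).1
  down_closed := by
    intro ρ ρ' hρ hsub hne
    obtain ⟨-, hl, hr⟩ := mem_joinFaces.mp hρ
    apply mem_joinFaces.mpr
    refine ⟨hne, ?_, ?_⟩
    · rcases Finset.eq_empty_or_nonempty (lefts ρ') with h0 | h1
      · rw [h0]; exact Finset.mem_insert_self _ _
      · have hsubl : lefts ρ' ⊆ lefts ρ := by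
          intro v hv
          simp only [lefts, Finset.mem_preimage] at hv ⊢
          exact hsub hv
        have hKf : lefts ρ ∈ K.faces := by
          rcases Finset.mem_insert.mp hl with h | h
          · obtain ⟨v, hv⟩ := h1
            exact absurd (hsubl hv) (by simp [h])
          · exact h
        exact Finset.mem_insert.mpr (Or.inr (K.down_closed hKf hsubl h1))
    · rcases Finset.eq_empty_or_nonempty (rights ρ') with h0 | h1
      · rw [h0]; exact Finset.mem_insert_self _ _
      · have hsubr : rights ρ' ⊆ rights ρ := by
          intro w hw
          simp only [rights, Finset.mem_preimage] at hw ⊢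
          exact hsub hw
        have hLf : rights ρ ∈ L.faces := by
          rcases Finset.mem_insert.mp hr with h | h
          · obtain ⟨w, hw⟩ := h1
            exact absurd (hsubr hw) (by simp [h])
          · exact h
        exact Finset.mem_insert.mpr (Or.inr (L.down_closed hLf hsubr h1))

/-! ### Finite posets (finite T₀-spaces) -/

variable {P : Type} [PartialOrder P]

/-- `x` is a beat point of the finite poset `X`: the points of `X` strictly below
`x` have a maximum, or the points of `X` strictly above `x` have a minimum. -/
def BeatPoint (X : Finset P) (x : P) : Prop :=
  x ∈ X ∧ ((∃ y ∈ X, y < x ∧ ∀ z ∈ X, z < x → z ≤ y) ∨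
    (∃ y ∈ X, x < y ∧ ∀ z ∈ X, x < z → y ≤ z))

/-- Elementary strong collapse of finite posets: removal of a beat point. -/
def ElemPosetStrongCollapse (X Y : Finset P) : Prop :=
  ∃ x, BeatPoint X x ∧ Y = X.erase x

/-- Strong collapse of finite posets: successive removal of beat points. -/
def PosetStrongCollapses : Finset P → Finset P → Prop :=
  Relation.ReflTransGen ElemPosetStrongCollapse

/-- A finite poset is contractible iff it strong collapses to a point (Stong). -/
def PosetContractible (X : Finset P) : Prop := ∃ x, PosetStrongCollapses X {x}

/-- The link `Ĉ_x` of `x` in `X`: the points of `X` comparable with `x` and distinct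
from it. -/
def posetLink (X : Finset P) (x : P) : Finset P :=
  X.filter fun y => y < x ∨ x < y

/-- `x` is a weak point of `X`: its link is contractible. -/
def WeakPoint (X : Finset P) (x : P) : Prop :=
  x ∈ X ∧ PosetContractible (posetLink X x)

/-- Collapse of finite posets: successive removal of weak points. -/
def PosetCollapses : Finset P → Finset P → Prop :=
  Relation.ReflTransGen (fun X Y => ∃ x, WeakPoint X x ∧ Y = X.erase x)

/-- A finite poset is collapsible if it collapses to a point. -/
def PosetCollapsible (X : Finset P) : Prop := ∃ x, PosetCollapses X {x}

/-- The order complex of a finite poset: faces are the nonempty chains. -/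
def orderCplx (X : Finset P) : Cplx P where
  faces := X.powerset.filter fun σ => σ.Nonempty ∧ IsChain (· ≤ ·) (σ : Set P)
  nonempty_of_mem := fun σ h => (Finset.mem_filter.mp h).2.1
  down_closed := by
    intro σ τ hσ hsub hne
    rw [Finset.mem_filter, Finset.mem_powerset] at hσ ⊢
    exact ⟨hsub.trans hσ.1, hne, hσ.2.2.mono (Finset.coe_subset.mpr hsub)⟩

/-- The barycentric subdivision of a complex: the order complex of its poset of
faces (the face poset, ordered by inclusion). -/
def sd (K : Cplx V) : Cplx (Finset V) := orderCplx K.faces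

/-- Homotopy of order-preserving maps between finite posets: being joined by a
fence in the pointwise order. -/
def PosetHomotopic {X Y : Type} [Preorder X] [Preorder Y] (f g : X →o Y) : Prop :=
  Relation.ReflTransGen (fun p q : X →o Y => p ≤ q ∨ q ≤ p) f g

/-- Homotopy equivalence of finite posets. -/
def PosetHomotopyEquiv (X Y : Type) [Preorder X] [Preorder Y] : Prop :=
  ∃ (f : X →o Y) (g : Y →o X),
    PosetHomotopic (g.comp f) OrderHom.id ∧ PosetHomotopic (f.comp g) OrderHom.id

/-! ### Classical collapses and n-collapses -/

/-- Elementary (classical) simplicial collapse: removal of a free face `σ`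
together with the unique face `τ` properly containing it. -/
def ElemCollapse (K L : Cplx V) : Prop :=
  ∃ σ τ : Finset V, σ ∈ K.faces ∧ τ ∈ K.faces ∧ σ ⊂ τ ∧
    (∀ ρ ∈ K.faces, σ ⊂ ρ → ρ = τ) ∧ L.faces = K.faces \ {σ, τ}

/-- Classical simplicial collapse. -/
def Collapses : Cplx V → Cplx V → Prop := Relation.ReflTransGen ElemCollapse

/-- A complex is collapsible if it collapses to a point. -/
def Collapsible (K : Cplx V) : Prop := ∃ v, Collapses K (pt v)

/-- `n`-collapses: a `0`-collapse is a strong collapse; an `(n+1)`-collapse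
successively deletes vertices whose links are `n`-collapsible. -/
def NCollapses : ℕ → Cplx V → Cplx V → Prop
  | 0 => StrongCollapses
  | n + 1 => Relation.ReflTransGen
      (fun K L => ∃ v, (∃ w, NCollapses n (linkCplx K v) (pt w)) ∧ L = delete K v)

/-- `K` is `n`-collapsible: it `n`-collapses to a single vertex. -/
def NCollapsible (n : ℕ) (K : Cplx V) : Prop := ∃ v, NCollapses n K (pt v)

/-- `K` is non-evasive: it is `n`-collapsible for some `n`. -/
def NonEvasive (K : Cplx V) : Prop := ∃ n, NCollapsible n K

end

lemma vertex_of_mem_face {K : Cplx V} {σ : Finset V} (hσ : σ ∈ K.faces)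
    {w : V} (hw : w ∈ σ) : IsVertex K w :=
  K.down_closed hσ (Finset.singleton_subset_iff.mpr hw) ⟨w, Finset.mem_singleton_self w⟩

/-- Key lemma: if `K` is minimal and `f` satisfies `σ.image f ∪ σ ∈ K.faces`
for every face `σ`, then `f` fixes every vertex. -/
lemma fix_of_contig_id {K : Cplx V} (hK : MinimalCplx K) {f : V → V}
    (hf : ∀ σ ∈ K.faces, σ.image f ∪ σ ∈ K.faces) :
    ∀ v : V, IsVertex K v → f v = v := by
  intro v hv
  by_contra hne
  apply hK v
  refine ⟨f v, ?_, ?_⟩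
  · -- {f v} ∈ link K v
    have hτ : ({v} : Finset V).image f ∪ {v} ∈ K.faces := hf _ hv
    have himg : ({v} : Finset V).image f = {f v} := Finset.image_singleton f v
    rw [himg] at hτ
    simp only [link, Finset.mem_filter]
    refine ⟨?_, ?_, ?_⟩
    · exact K.down_closed hτ (by intro x hx; simp at hx; simp [hx]) ⟨f v, by simp⟩
    · simp [Ne.symm hne]
    · refine K.down_closed hτ ?_ ⟨v, by simp⟩
      intro x hx
      simp only [Finset.mem_insert, Finset.mem_singleton] at hx
      rcases hx with h | h <;> simp [h]
  · intro σ hσ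
    simp only [link, Finset.mem_filter] at hσ ⊢
    obtain ⟨hσK, hvσ, hins⟩ := hσ
    set τ := (insert v σ).image f ∪ insert v σ with hτdef
    have hτ : τ ∈ K.faces := hf _ hins
    have hfvτ : f v ∈ τ := by
      apply Finset.mem_union_left
      exact Finset.mem_image_of_mem f (Finset.mem_insert_self v σ)
    have hsubσ : σ ⊆ τ := fun x hx =>
      Finset.mem_union_right _ (Finset.mem_insert_of_mem hx)
    have hvτ : v ∈ τ := Finset.mem_union_right _ (Finset.mem_insert_self v σ)
    refine ⟨?_, ?_, ?_⟩
    · refine K.down_closed hτ ?_ ⟨f v, Finset.mem_insert_self _ _⟩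
      intro x hx
      rcases Finset.mem_insert.mp hx with h | h
      · exact h ▸ hfvτ
      · exact hsubσ h
    · intro hmem
      rcases Finset.mem_insert.mp hmem with h | h
      · exact hne h.symm
      · exact hvσ h
    · refine K.down_closed hτ ?_ ⟨v, Finset.mem_insert_self _ _⟩
      intro x hx
      rcases Finset.mem_insert.mp hx with h | h
      · exact h ▸ hvτ
      · rcases Finset.mem_insert.mp h with h' | h'
        · exact h' ▸ hfvτ
        · exact hsubσ h'

lemma image_eq_self_of_fix {K : Cplx V} {g : V → V}
    (hg : ∀ v : V, IsVertex K v → g v = v) {σ : Finset V} (hσ : σ ∈ K.faces) :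
    σ.image g = σ := by
  have : ∀ x ∈ σ, g x = x := fun x hx => hg x (vertex_of_mem_face hσ hx)
  calc σ.image g = σ.image id := Finset.image_congr (fun x hx => this x hx)
    _ = σ := Finset.image_id

/-- a simplicial map from a minimal complex to itself lying in the
contiguity class of the identity is the identity. -/
theorem stmt0 {V : Type} (K : Cplx V) (hK : MinimalCplx K) (φ : V → V)
    (hφ : IsSimplicial K K φ) (h : ContigClass K K φ id) :
    ∀ v : V, IsVertex K v → φ v = v := by
  have main : ∀ f g : V → V, ContigClass K K f g →
      (∀ v : V, IsVertex K v → g v = v) → ∀ v : V, IsVertex K v → f v = v := by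
    intro f g hfg
    induction hfg with
    | refl => exact fun h => h
    | tail _ hcont ih =>
      intro hg
      apply ih
      apply fix_of_contig_id hK
      intro σ hσ
      have := hcont σ hσ
      rwa [image_eq_self_of_fix hg hσ] at this
  exact main φ id h (fun v _ => rfl)

end StrongHomotopy
end

section
/- Every strong equivalence between minimal finite simplicial complexes is a simplicial isomorphism. -/
/- Theory of strong homotopy types of finite simplicial complexes
   (Barmak–Minian), basic definitions. -/

open Classical

namespace StrongHomotopy

variable {V W : Type}

lemma vertex_of_mem (K : Cplx V) {σ : Finset V} (h : σ ∈ K.faces) {v : V}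
    (hv : v ∈ σ) : IsVertex K v :=
  K.down_closed h (Finset.singleton_subset_iff.mpr hv) ⟨v, Finset.mem_singleton_self v⟩

/-- In a minimal complex, a map contiguous to the identity fixes every vertex. -/
lemma fix_of_contig (K : Cplx V) (hK : MinimalCplx K) (p : V → V)
    (hp : ∀ σ ∈ K.faces, σ.image p ∪ σ ∈ K.faces) :
    ∀ v, IsVertex K v → p v = v := by
  intro v hv
  by_contra hne
  apply hK v
  refine ⟨p v, ?_, ?_⟩
  · -- {p v} ∈ link K v
    have h1 : ({v} : Finset V).image p ∪ {v} ∈ K.faces := hp _ hv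
    have himg : ({v} : Finset V).image p = {p v} := by simp
    rw [himg] at h1
    have hsub : ({p v} : Finset V) ⊆ {p v} ∪ {v} := Finset.subset_union_left
    have h2 : ({p v} : Finset V) ∈ K.faces :=
      K.down_closed h1 hsub ⟨p v, Finset.mem_singleton_self _⟩
    have heq : insert v ({p v} : Finset V) = {p v} ∪ {v} := by
      ext x; simp; tauto
    rw [link, Finset.mem_filter]
    refine ⟨h2, ?_, by rw [heq]; exact h1⟩
    simp only [Finset.mem_singleton]
    exact fun h => hne h.symm
  · intro σ hσ
    rw [link, Finset.mem_filter] at hσ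
    obtain ⟨hσK, hvσ, hins⟩ := hσ
    have h1 : (insert v σ).image p ∪ insert v σ ∈ K.faces := hp _ hins
    have hpv : p v ∈ (insert v σ).image p :=
      Finset.mem_image_of_mem p (Finset.mem_insert_self v σ)
    have hsub : insert (p v) (insert v σ) ⊆ (insert v σ).image p ∪ insert v σ := by
      intro x hx
      rcases Finset.mem_insert.mp hx with h | h
      · subst h; exact Finset.mem_union_left _ hpv
      · exact Finset.mem_union_right _ h
    have h2 : insert (p v) (insert v σ) ∈ K.faces :=
      K.down_closed h1 hsub ⟨p v, Finset.mem_insert_self _ _⟩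
    have h3 : insert (p v) σ ∈ K.faces := by
      refine K.down_closed h2 ?_ ⟨p v, Finset.mem_insert_self _ _⟩
      intro x hx
      rcases Finset.mem_insert.mp hx with h | h
      · subst h; exact Finset.mem_insert_self _ _
      · exact Finset.mem_insert_of_mem (Finset.mem_insert_of_mem h)
    rw [link, Finset.mem_filter]
    refine ⟨h3, ?_, ?_⟩
    · simp only [Finset.mem_insert]
      rintro (h | h)
      · exact hne h.symm
      · exact hvσ h
    · rw [Finset.insert_comm]; exact h2

/-- In a minimal complex, a map in the contiguity class of the identity fixes
every vertex. -/
lemma fix_of_class (K : Cplx V) (hK : MinimalCplx K) {p : V → V}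
    (h : ContigClass K K p id) : ∀ v, IsVertex K v → p v = v := by
  induction h using Relation.ReflTransGen.head_induction_on with
  | refl => intro v _; rfl
  | head hac _ ih =>
    rename_i a c _
    apply fix_of_contig K hK
    intro σ hσ
    have := hac σ hσ
    have himg : σ.image c = σ := by
      rw [show σ.image c = σ.image id from
        Finset.image_congr fun x hx => ih x (vertex_of_mem K hσ hx), Finset.image_id]
    rw [himg] at this
    exact this

/-- a strong equivalence between minimal complexes is an isomorphism. -/
theorem stmt1 {V W : Type} (K : Cplx V) (L : Cplx W) (hK : MinimalCplx K)
    (hL : MinimalCplx L) (φ : V → W) (hφ : StrongEquiv K L φ) :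
    IsIsoMap K L φ := by
  obtain ⟨hφs, g, hgs, hgf, hfg⟩ := hφ
  have hKfix : ∀ v, IsVertex K v → g (φ v) = v := fix_of_class K hK hgf
  have hLfix : ∀ w, IsVertex L w → φ (g w) = w := fix_of_class L hL hfg
  refine ⟨hφs, ?_, ?_⟩
  · intro a ha b hb hab
    calc a = g (φ a) := (hKfix a ha).symm
    _ = g (φ b) := by rw [hab]
    _ = b := hKfix b hb
  · apply Finset.Subset.antisymm
    · intro τ hτ
      rw [Finset.mem_image] at hτ
      obtain ⟨σ, hσ, rfl⟩ := hτ
      exact hφs σ hσ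
    · intro τ hτ
      rw [Finset.mem_image]
      refine ⟨τ.image g, hgs τ hτ, ?_⟩
      rw [Finset.image_image]
      rw [show τ.image (φ ∘ g) = τ.image id from
        Finset.image_congr fun w hw => hLfix w (vertex_of_mem L hτ hw), Finset.image_id]

end StrongHomotopy
end

section
/- Let K be a finite simplicial complex and let v be a vertex of K dominated by a vertex v' ≠ v. Then the inclusion i : K∖v ↪ K is a strong equivalence; more precisely, the simplicial retraction r : K → K∖v that is the identity on K∖v and sends v to v' satisfies that i∘r is contiguous to the identity of K and r∘i is the identity of K∖v. -/
/- Theory of strong homotopy types of finite simplicial complexes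
   (Barmak–Minian), basic definitions. -/

open Classical

namespace StrongHomotopy

variable {V W : Type}

/-- if `v` is dominated by `v' ≠ v` then the inclusion
`K∖v ↪ K` is a strong equivalence; the retraction `r` (identity on `K∖v`,
sending `v` to `v'`) is simplicial, `i ∘ r` is contiguous to the identity of `K`,
and `r ∘ i` is the identity of `K∖v`. -/
theorem stmt2 {V : Type} (K : Cplx V) (v v' : V) (hv : IsVertex K v) (hne : v' ≠ v)
    (hdom : DominatedBy K v v') :
    StrongEquiv (delete K v) K id ∧
      IsSimplicial K (delete K v) (fun u => if u = v then v' else u) ∧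
      Contiguous K K (id ∘ fun u => if u = v then v' else u) id ∧
      ∀ u, IsVertex (delete K v) u → (if u = v then v' else u) = u := by
  classical
  set r : V → V := fun u => if u = v then v' else u with hr
  -- key: if v ∈ σ ∈ K, then insert v' σ ∈ K
  have key : ∀ σ ∈ K.faces, v ∈ σ → insert v' σ ∈ K.faces := by
    intro σ hσ hvσ
    rcases Finset.eq_empty_or_nonempty (σ.erase v) with h0 | h1
    · have hσv : σ = {v} := by
        apply Finset.eq_singleton_iff_unique_mem.mpr
        refine ⟨hvσ, fun x hx => ?_⟩
        by_contra hxne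
        exact absurd (Finset.mem_erase.mpr ⟨hxne, hx⟩) (by simp [h0])
      have h1 := hdom.1
      simp only [link, Finset.mem_filter] at h1
      have hpair : insert v' ({v} : Finset V) = insert v {v'} := by
        ext x; simp [or_comm]
      rw [hσv, hpair]
      exact h1.2.2
    · set τ := σ.erase v with hτ
      have hτlink : τ ∈ link K v := by
        simp only [link, Finset.mem_filter]
        refine ⟨K.down_closed hσ (Finset.erase_subset _ _) h1,
          Finset.notMem_erase _ _, ?_⟩
        rw [Finset.insert_erase hvσ]; exact hσ
      have h2 := hdom.2 τ hτlink
      simp only [link, Finset.mem_filter] at h2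
      have : insert v (insert v' τ) ∈ K.faces := h2.2.2
      rw [Finset.insert_comm, Finset.insert_erase hvσ] at this
      exact this
  -- r maps faces into insert v' σ
  have himg : ∀ σ : Finset V, σ.image r ⊆ insert v' σ := by
    intro σ x hx
    rw [Finset.mem_image] at hx
    obtain ⟨u, hu, hux⟩ := hx
    by_cases h : u = v
    · simp [hr, h] at hux; subst hux; exact Finset.mem_insert_self _ _
    · simp [hr, h] at hux; subst hux; exact Finset.mem_insert_of_mem hu
  have himg_eq : ∀ σ : Finset V, v ∉ σ → σ.image r = σ := by
    intro σ hvσ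
    apply Finset.image_congr (g := id) ?_ |>.trans (Finset.image_id)
    intro x hx
    have : x ≠ v := fun h => hvσ (h ▸ hx)
    simp [hr, this]
  -- r is simplicial K → delete K v
  have hrsimp : IsSimplicial K (delete K v) r := by
    intro σ hσ
    have hvnot : v ∉ σ.image r := by
      intro h
      rw [Finset.mem_image] at h
      obtain ⟨u, hu, hux⟩ := h
      by_cases h' : u = v
      · simp [hr, h'] at hux; exact hne hux
      · simp [hr, h'] at hux
    simp only [delete, Finset.mem_filter]
    refine ⟨?_, hvnot⟩
    by_cases hvσ : v ∈ σ
    · have hsub : σ.image r ⊆ insert v' σ := himg σ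
      exact K.down_closed (key σ hσ hvσ) hsub
        ((K.nonempty_of_mem hσ).image r)
    · rw [himg_eq σ hvσ]; exact hσ
  -- contiguity of r with id on K
  have hcont : Contiguous K K (id ∘ r) id := by
    intro σ hσ
    rw [Finset.image_id, Function.id_comp]
    by_cases hvσ : v ∈ σ
    · have hsub : σ.image r ∪ σ ⊆ insert v' σ := by
        apply Finset.union_subset (himg σ) (Finset.subset_insert _ _)
      exact K.down_closed (key σ hσ hvσ) hsub
        ((K.nonempty_of_mem hσ).mono Finset.subset_union_right)
    · rw [himg_eq σ hvσ, Finset.union_self]; exact hσ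
  have hdelsub : (delete K v).faces ⊆ K.faces := by
    intro σ hσ; exact (Finset.mem_filter.mp hσ).1
  refine ⟨⟨?_, r, hrsimp, ?_, ?_⟩, hrsimp, hcont, ?_⟩
  · intro σ hσ; rw [Finset.image_id]; exact hdelsub hσ
  · -- ContigClass (delete K v) (delete K v) (r ∘ id) id
    apply Relation.ReflTransGen.single
    intro σ hσ
    have hvσ : v ∉ σ := (Finset.mem_filter.mp hσ).2
    rw [Finset.image_id, Function.comp_id, himg_eq σ hvσ, Finset.union_self]
    exact hσ
  · exact Relation.ReflTransGen.single hcont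
  · intro u hu
    have : v ∉ ({u} : Finset V) := (Finset.mem_filter.mp hu).2
    have : u ≠ v := fun h => this (by simp [h])
    simp [this]

end StrongHomotopy
end

section
/- Let K and L be finite simplicial complexes with disjoint vertex sets. Then the join K*L is strong collapsible if and only if K is strong collapsible or L is strong collapsible. -/
/- Theory of strong homotopy types of finite simplicial complexes
   (Barmak–Minian), basic definitions. -/

open Classical

namespace StrongHomotopy

variable {V W : Type}

/-! ### Auxiliary lemmas for statement 5 -/

section Aux

noncomputable local instance (priority := 2000) sumDecEq : DecidableEq (V ⊕ W) :=
  fun a b => Classical.propDecidable _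

lemma Cplx.ext' {K L : Cplx V} (h : K.faces = L.faces) : K = L := by
  cases K; cases L; simpa using h

lemma delete_faces (K : Cplx V) (v : V) :
    (delete K v).faces = K.faces.filter (fun σ => v ∉ σ) := rfl

lemma join_faces (K : Cplx V) (L : Cplx W) : (join K L).faces = joinFaces K L := rfl

lemma pt_faces (v : V) : (pt v).faces = {{v}} := rfl

lemma mem_insert_empty {α : Type} {F : Finset (Finset α)} {σ : Finset α}
    (h : σ ∈ insert ∅ F) (hne : σ.Nonempty) : σ ∈ F := by
  rcases Finset.mem_insert.mp h with h | h
  · exact absurd h (Finset.nonempty_iff_ne_empty.mp hne)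
  · exact h

lemma mem_lefts {σ : Finset (V ⊕ W)} {v : V} : v ∈ lefts σ ↔ Sum.inl v ∈ σ := by
  simp [lefts]

lemma mem_rights {σ : Finset (V ⊕ W)} {w : W} : w ∈ rights σ ↔ Sum.inr w ∈ σ := by
  simp [rights]

lemma lefts_insert_inl [DecidableEq (V ⊕ W)] (v : V) (σ : Finset (V ⊕ W)) :
    lefts (insert (Sum.inl v) σ) = insert v (lefts σ) := by
  ext x; simp [lefts]

lemma rights_insert_inl [DecidableEq (V ⊕ W)] (v : V) (σ : Finset (V ⊕ W)) :
    rights (insert (Sum.inl v) σ) = rights σ := by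
  ext x; simp [rights]

lemma lefts_insert_inr [DecidableEq (V ⊕ W)] (w : W) (σ : Finset (V ⊕ W)) :
    lefts (insert (Sum.inr w) σ) = lefts σ := by
  ext x; simp [lefts]

lemma rights_insert_inr [DecidableEq (V ⊕ W)] (w : W) (σ : Finset (V ⊕ W)) :
    rights (insert (Sum.inr w) σ) = insert w (rights σ) := by
  ext x; simp [rights]

lemma lefts_image_inl (σ : Finset V) : lefts ((σ.image Sum.inl : Finset (V ⊕ W))) = σ := by
  ext x; simp [lefts]

lemma rights_image_inl (σ : Finset V) : rights ((σ.image Sum.inl : Finset (V ⊕ W))) = (∅ : Finset W) := by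
  ext x; simp [rights]

lemma lefts_image_inr (τ : Finset W) : lefts ((τ.image Sum.inr : Finset (V ⊕ W))) = (∅ : Finset V) := by
  ext x; simp [lefts]

lemma rights_image_inr (τ : Finset W) : rights ((τ.image Sum.inr : Finset (V ⊕ W))) = τ := by
  ext x; simp [rights]

lemma lefts_singleton_inl (v : V) : lefts ({Sum.inl v} : Finset (V ⊕ W)) = {v} := by
  ext x; simp [lefts]

lemma rights_singleton_inl (v : V) : rights ({Sum.inl v} : Finset (V ⊕ W)) = (∅ : Finset W) := by
  ext x; simp [rights]

lemma lefts_singleton_inr (w : W) : lefts ({Sum.inr w} : Finset (V ⊕ W)) = (∅ : Finset V) := by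
  ext x; simp [lefts]

lemma rights_singleton_inr (w : W) : rights ({Sum.inr w} : Finset (V ⊕ W)) = {w} := by
  ext x; simp [rights]

lemma mem_link {K : Cplx V} {v : V} {σ : Finset V} :
    σ ∈ link K v ↔ σ ∈ K.faces ∧ v ∉ σ ∧ insert v σ ∈ K.faces := by
  simp [link, Finset.mem_filter, and_assoc]

lemma vertex_of_dominated {K : Cplx V} {v : V} (h : Dominated K v) : IsVertex K v := by
  obtain ⟨a, ha, -⟩ := h
  obtain ⟨-, -, hins⟩ := mem_link.mp ha
  exact K.down_closed hins (Finset.singleton_subset_iff.mpr (Finset.mem_insert_self v {a}))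
    (Finset.singleton_nonempty v)


lemma mem_link_join_inl {K : Cplx V} {L : Cplx W} {v : V} {σ : Finset (V ⊕ W)} :
    σ ∈ link (join K L) (Sum.inl v) ↔
      σ.Nonempty ∧ v ∉ lefts σ ∧ insert v (lefts σ) ∈ K.faces ∧
        rights σ ∈ insert ∅ L.faces := by
  constructor
  · intro h
    obtain ⟨h1, h2, h3⟩ := mem_link.mp h
    obtain ⟨hne, -, -⟩ := mem_joinFaces.mp h1
    obtain ⟨-, hl', hr'⟩ := mem_joinFaces.mp h3
    rw [lefts_insert_inl] at hl'
    rw [rights_insert_inl] at hr'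
    refine ⟨hne, fun hm => h2 (mem_lefts.mp hm), ?_, hr'⟩
    exact mem_insert_empty hl' (Finset.insert_nonempty _ _)
  · rintro ⟨hne, hv, hins, hrs⟩
    refine mem_link.mpr ⟨?_, fun hm => hv (mem_lefts.mpr hm), ?_⟩
    · refine mem_joinFaces.mpr ⟨hne, ?_, hrs⟩
      rcases Finset.eq_empty_or_nonempty (lefts σ) with h0 | h0
      · rw [h0]; exact Finset.mem_insert_self _ _
      · exact Finset.mem_insert_of_mem (K.down_closed hins (Finset.subset_insert _ _) h0)
    · refine mem_joinFaces.mpr ⟨⟨_, Finset.mem_insert_self _ _⟩, ?_, ?_⟩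
      · rw [lefts_insert_inl]; exact Finset.mem_insert_of_mem hins
      · rw [rights_insert_inl]; exact hrs

lemma mem_link_join_inr {K : Cplx V} {L : Cplx W} {w : W} {σ : Finset (V ⊕ W)} :
    σ ∈ link (join K L) (Sum.inr w) ↔
      σ.Nonempty ∧ w ∉ rights σ ∧ insert w (rights σ) ∈ L.faces ∧
        lefts σ ∈ insert ∅ K.faces := by
  constructor
  · intro h
    obtain ⟨h1, h2, h3⟩ := mem_link.mp h
    obtain ⟨hne, -, -⟩ := mem_joinFaces.mp h1
    obtain ⟨-, hl', hr'⟩ := mem_joinFaces.mp h3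
    rw [lefts_insert_inr] at hl'
    rw [rights_insert_inr] at hr'
    refine ⟨hne, fun hm => h2 (mem_rights.mp hm), ?_, hl'⟩
    exact mem_insert_empty hr' (Finset.insert_nonempty _ _)
  · rintro ⟨hne, hw, hins, hls⟩
    refine mem_link.mpr ⟨?_, fun hm => hw (mem_rights.mpr hm), ?_⟩
    · refine mem_joinFaces.mpr ⟨hne, hls, ?_⟩
      rcases Finset.eq_empty_or_nonempty (rights σ) with h0 | h0
      · rw [h0]; exact Finset.mem_insert_self _ _
      · exact Finset.mem_insert_of_mem (L.down_closed hins (Finset.subset_insert _ _) h0)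
    · refine mem_joinFaces.mpr ⟨⟨_, Finset.mem_insert_self _ _⟩, ?_, ?_⟩
      · rw [lefts_insert_inr]; exact hls
      · rw [rights_insert_inr]; exact Finset.mem_insert_of_mem hins

lemma image_inl_mem_link_join {K : Cplx V} {L : Cplx W} {v : V} {τ : Finset V}
    (h : τ ∈ link K v) : τ.image Sum.inl ∈ link (join K L) (Sum.inl v) := by
  obtain ⟨hf, hv, hins⟩ := mem_link.mp h
  refine mem_link_join_inl.mpr ⟨(K.nonempty_of_mem hf).image _, ?_, ?_, ?_⟩
  · rw [lefts_image_inl]; exact hv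
  · rw [lefts_image_inl]; exact hins
  · rw [rights_image_inl]; exact Finset.mem_insert_self _ _

lemma image_inr_mem_link_join {K : Cplx V} {L : Cplx W} {w : W} {τ : Finset W}
    (h : τ ∈ link L w) : τ.image Sum.inr ∈ link (join K L) (Sum.inr w) := by
  obtain ⟨hf, hw, hins⟩ := mem_link.mp h
  refine mem_link_join_inr.mpr ⟨(L.nonempty_of_mem hf).image _, ?_, ?_, ?_⟩
  · rw [rights_image_inr]; exact hw
  · rw [rights_image_inr]; exact hins
  · rw [lefts_image_inr]; exact Finset.mem_insert_self _ _

lemma dominated_join_inl_iff {K : Cplx V} {L : Cplx W} {v : V} :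
    Dominated (join K L) (Sum.inl v) ↔ IsVertex K v ∧ (Dominated K v ∨ IsCone L.faces) := by
  constructor
  · rintro ⟨a, ha, hcone⟩
    obtain ⟨-, -, hins0, -⟩ := mem_link_join_inl.mp ha
    have hv : IsVertex K v :=
      K.down_closed hins0 (Finset.singleton_subset_iff.mpr (Finset.mem_insert_self _ _))
        (Finset.singleton_nonempty v)
    refine ⟨hv, ?_⟩
    cases a with
    | inl v' =>
      left
      obtain ⟨-, hvl, hins, -⟩ := mem_link_join_inl.mp ha
      rw [lefts_singleton_inl] at hvl hins
      refine ⟨v', mem_link.mpr ⟨K.down_closed hins (Finset.subset_insert _ _)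
        (Finset.singleton_nonempty _), hvl, hins⟩, ?_⟩
      intro τ hτ
      have h2 := hcone _ (image_inl_mem_link_join (L := L) hτ)
      obtain ⟨-, hv2, hins2, -⟩ := mem_link_join_inl.mp h2
      rw [lefts_insert_inl, lefts_image_inl] at hv2 hins2
      exact mem_link.mpr ⟨K.down_closed hins2 (Finset.subset_insert _ _)
        ⟨v', Finset.mem_insert_self _ _⟩, hv2, hins2⟩
    | inr w' =>
      right
      obtain ⟨-, -, -, hrs⟩ := mem_link_join_inl.mp ha
      rw [rights_singleton_inr] at hrs
      have hw' : {w'} ∈ L.faces := mem_insert_empty hrs (Finset.singleton_nonempty _)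
      refine ⟨w', hw', ?_⟩
      intro τ hτ
      have hτj : τ.image Sum.inr ∈ link (join K L) (Sum.inl v) := by
        refine mem_link_join_inl.mpr ⟨(L.nonempty_of_mem hτ).image _, ?_, ?_, ?_⟩
        · rw [lefts_image_inr]; simp
        · rw [lefts_image_inr]; simpa [IsVertex] using hv
        · rw [rights_image_inr]; exact Finset.mem_insert_of_mem hτ
      have h2 := hcone _ hτj
      obtain ⟨-, -, -, hrs2⟩ := mem_link_join_inl.mp h2
      rw [rights_insert_inr, rights_image_inr] at hrs2
      exact mem_insert_empty hrs2 ⟨w', Finset.mem_insert_self _ _⟩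
  · rintro ⟨hv, hd | hc⟩
    · obtain ⟨v', hv'mem, hv'apex⟩ := hd
      obtain ⟨h'f, h'nv, h'ins⟩ := mem_link.mp hv'mem
      have hvv' : v ≠ v' := by simpa using h'nv
      refine ⟨Sum.inl v', mem_link_join_inl.mpr ⟨Finset.singleton_nonempty _, ?_, ?_, ?_⟩, ?_⟩
      · rw [lefts_singleton_inl]; exact h'nv
      · rw [lefts_singleton_inl]; exact h'ins
      · rw [rights_singleton_inl]; exact Finset.mem_insert_self _ _
      · intro σ hσ
        obtain ⟨hne, hvl, hins, hrs⟩ := mem_link_join_inl.mp hσ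
        refine mem_link_join_inl.mpr ⟨⟨_, Finset.mem_insert_self _ _⟩, ?_, ?_, ?_⟩
        · rw [lefts_insert_inl]; simp [Finset.mem_insert, hvv', hvl]
        · rw [lefts_insert_inl]
          rcases Finset.eq_empty_or_nonempty (lefts σ) with h0 | h0
          · rw [h0]; simpa using h'ins
          · have hmem : lefts σ ∈ link K v :=
              mem_link.mpr ⟨K.down_closed hins (Finset.subset_insert _ _) h0, hvl, hins⟩
            exact (mem_link.mp (hv'apex _ hmem)).2.2
        · rw [rights_insert_inl]; exact hrs
    · obtain ⟨w', hw'mem, hw'apex⟩ := hc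
      refine ⟨Sum.inr w', mem_link_join_inl.mpr ⟨Finset.singleton_nonempty _, ?_, ?_, ?_⟩, ?_⟩
      · rw [lefts_singleton_inr]; simp
      · rw [lefts_singleton_inr]; simpa [IsVertex] using hv
      · rw [rights_singleton_inr]; exact Finset.mem_insert_of_mem hw'mem
      · intro σ hσ
        obtain ⟨hne, hvl, hins, hrs⟩ := mem_link_join_inl.mp hσ
        refine mem_link_join_inl.mpr ⟨⟨_, Finset.mem_insert_self _ _⟩, ?_, ?_, ?_⟩
        · rw [lefts_insert_inr]; exact hvl
        · rw [lefts_insert_inr]; exact hins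
        · rw [rights_insert_inr]
          rcases Finset.eq_empty_or_nonempty (rights σ) with h0 | h0
          · rw [h0, show (insert w' (∅ : Finset W)) = {w'} from by ext x; simp]
            exact Finset.mem_insert_of_mem hw'mem
          · exact Finset.mem_insert_of_mem (hw'apex _ (mem_insert_empty hrs h0))

lemma dominated_join_inr_iff {K : Cplx V} {L : Cplx W} {w : W} :
    Dominated (join K L) (Sum.inr w) ↔ IsVertex L w ∧ (Dominated L w ∨ IsCone K.faces) := by
  constructor
  · rintro ⟨a, ha, hcone⟩
    obtain ⟨-, -, hins0, -⟩ := mem_link_join_inr.mp ha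
    have hw : IsVertex L w :=
      L.down_closed hins0 (Finset.singleton_subset_iff.mpr (Finset.mem_insert_self _ _))
        (Finset.singleton_nonempty w)
    refine ⟨hw, ?_⟩
    cases a with
    | inr w' =>
      left
      obtain ⟨-, hwl, hins, -⟩ := mem_link_join_inr.mp ha
      rw [rights_singleton_inr] at hwl hins
      refine ⟨w', mem_link.mpr ⟨L.down_closed hins (Finset.subset_insert _ _)
        (Finset.singleton_nonempty _), hwl, hins⟩, ?_⟩
      intro τ hτ
      have h2 := hcone _ (image_inr_mem_link_join (K := K) hτ)
      obtain ⟨-, hw2, hins2, -⟩ := mem_link_join_inr.mp h2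
      rw [rights_insert_inr, rights_image_inr] at hw2 hins2
      exact mem_link.mpr ⟨L.down_closed hins2 (Finset.subset_insert _ _)
        ⟨w', Finset.mem_insert_self _ _⟩, hw2, hins2⟩
    | inl v' =>
      right
      obtain ⟨-, -, -, hls⟩ := mem_link_join_inr.mp ha
      rw [lefts_singleton_inl] at hls
      have hv' : {v'} ∈ K.faces := mem_insert_empty hls (Finset.singleton_nonempty _)
      refine ⟨v', hv', ?_⟩
      intro τ hτ
      have hτj : τ.image Sum.inl ∈ link (join K L) (Sum.inr w) := by
        refine mem_link_join_inr.mpr ⟨(K.nonempty_of_mem hτ).image _, ?_, ?_, ?_⟩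
        · rw [rights_image_inl]; simp
        · rw [rights_image_inl]; simpa [IsVertex] using hw
        · rw [lefts_image_inl]; exact Finset.mem_insert_of_mem hτ
      have h2 := hcone _ hτj
      obtain ⟨-, -, -, hls2⟩ := mem_link_join_inr.mp h2
      rw [lefts_insert_inl, lefts_image_inl] at hls2
      exact mem_insert_empty hls2 ⟨v', Finset.mem_insert_self _ _⟩
  · rintro ⟨hw, hd | hc⟩
    · obtain ⟨w', hw'mem, hw'apex⟩ := hd
      obtain ⟨h'f, h'nw, h'ins⟩ := mem_link.mp hw'mem
      have hww' : w ≠ w' := by simpa using h'nw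
      refine ⟨Sum.inr w', mem_link_join_inr.mpr ⟨Finset.singleton_nonempty _, ?_, ?_, ?_⟩, ?_⟩
      · rw [rights_singleton_inr]; exact h'nw
      · rw [rights_singleton_inr]; exact h'ins
      · rw [lefts_singleton_inr]; exact Finset.mem_insert_self _ _
      · intro σ hσ
        obtain ⟨hne, hwl, hins, hls⟩ := mem_link_join_inr.mp hσ
        refine mem_link_join_inr.mpr ⟨⟨_, Finset.mem_insert_self _ _⟩, ?_, ?_, ?_⟩
        · rw [rights_insert_inr]; simp [Finset.mem_insert, hww', hwl]
        · rw [rights_insert_inr]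
          rcases Finset.eq_empty_or_nonempty (rights σ) with h0 | h0
          · rw [h0]; simpa using h'ins
          · have hmem : rights σ ∈ link L w :=
              mem_link.mpr ⟨L.down_closed hins (Finset.subset_insert _ _) h0, hwl, hins⟩
            exact (mem_link.mp (hw'apex _ hmem)).2.2
        · rw [lefts_insert_inr]; exact hls
    · obtain ⟨v', hv'mem, hv'apex⟩ := hc
      refine ⟨Sum.inl v', mem_link_join_inr.mpr ⟨Finset.singleton_nonempty _, ?_, ?_, ?_⟩, ?_⟩
      · rw [rights_singleton_inl]; simp
      · rw [rights_singleton_inl]; simpa [IsVertex] using hw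
      · rw [lefts_singleton_inl]; exact Finset.mem_insert_of_mem hv'mem
      · intro σ hσ
        obtain ⟨hne, hwl, hins, hls⟩ := mem_link_join_inr.mp hσ
        refine mem_link_join_inr.mpr ⟨⟨_, Finset.mem_insert_self _ _⟩, ?_, ?_, ?_⟩
        · rw [rights_insert_inl]; exact hwl
        · rw [rights_insert_inl]; exact hins
        · rw [lefts_insert_inl]
          rcases Finset.eq_empty_or_nonempty (lefts σ) with h0 | h0
          · rw [h0, show (insert v' (∅ : Finset V)) = {v'} from by ext x; simp]
            exact Finset.mem_insert_of_mem hv'mem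
          · exact Finset.mem_insert_of_mem (hv'apex _ (mem_insert_empty hls h0))

lemma delete_join_inl (K : Cplx V) (L : Cplx W) (v : V) :
    delete (join K L) (Sum.inl v) = join (delete K v) L := by
  apply Cplx.ext'
  rw [delete_faces, join_faces, join_faces]
  ext σ
  constructor
  · intro h
    rw [Finset.mem_filter] at h
    obtain ⟨h1, h2⟩ := h
    obtain ⟨hne, hl, hr⟩ := mem_joinFaces.mp h1
    refine mem_joinFaces.mpr ⟨hne, ?_, hr⟩
    rcases Finset.mem_insert.mp hl with h0 | h0
    · rw [h0]; exact Finset.mem_insert_self _ _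
    · refine Finset.mem_insert_of_mem ?_
      rw [delete_faces, Finset.mem_filter]
      exact ⟨h0, fun hm => h2 (mem_lefts.mp hm)⟩
  · intro h
    obtain ⟨hne, hl, hr⟩ := mem_joinFaces.mp h
    rw [delete_faces] at hl
    refine Finset.mem_filter.mpr ⟨mem_joinFaces.mpr ⟨hne, ?_, hr⟩, ?_⟩
    · rcases Finset.mem_insert.mp hl with h0 | h0
      · rw [h0]; exact Finset.mem_insert_self _ _
      · exact Finset.mem_insert_of_mem (Finset.mem_filter.mp h0).1
    · intro hm
      rcases Finset.mem_insert.mp hl with h0 | h0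
      · have := mem_lefts.mpr hm
        rw [h0] at this
        simp at this
      · exact (Finset.mem_filter.mp h0).2 (mem_lefts.mpr hm)

lemma delete_join_inr (K : Cplx V) (L : Cplx W) (w : W) :
    delete (join K L) (Sum.inr w) = join K (delete L w) := by
  apply Cplx.ext'
  rw [delete_faces, join_faces, join_faces]
  ext σ
  constructor
  · intro h
    rw [Finset.mem_filter] at h
    obtain ⟨h1, h2⟩ := h
    obtain ⟨hne, hl, hr⟩ := mem_joinFaces.mp h1
    refine mem_joinFaces.mpr ⟨hne, hl, ?_⟩
    rcases Finset.mem_insert.mp hr with h0 | h0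
    · rw [h0]; exact Finset.mem_insert_self _ _
    · refine Finset.mem_insert_of_mem ?_
      rw [delete_faces, Finset.mem_filter]
      exact ⟨h0, fun hm => h2 (mem_rights.mp hm)⟩
  · intro h
    obtain ⟨hne, hl, hr⟩ := mem_joinFaces.mp h
    rw [delete_faces] at hr
    refine Finset.mem_filter.mpr ⟨mem_joinFaces.mpr ⟨hne, hl, ?_⟩, ?_⟩
    · rcases Finset.mem_insert.mp hr with h0 | h0
      · rw [h0]; exact Finset.mem_insert_self _ _
      · exact Finset.mem_insert_of_mem (Finset.mem_filter.mp h0).1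
    · intro hm
      rcases Finset.mem_insert.mp hr with h0 | h0
      · have := mem_rights.mpr hm
        rw [h0] at this
        simp at this
      · exact (Finset.mem_filter.mp h0).2 (mem_rights.mpr hm)

lemma delete_faces_ssubset {K : Cplx V} {v : V} (hv : IsVertex K v) :
    (delete K v).faces ⊂ K.faces := by
  rw [delete_faces, Finset.ssubset_iff_of_subset (Finset.filter_subset _ _)]
  exact ⟨{v}, hv, by simp⟩

/-- A cone is strong collapsible. -/
lemma cone_strongCollapsible_aux :
    ∀ (n : ℕ) (K : Cplx V), K.faces.card ≤ n → IsCone K.faces → StrongCollapsible K := by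
  intro n
  induction n with
  | zero =>
    rintro K hcard ⟨a, ha, -⟩
    have := Finset.card_pos.mpr ⟨{a}, ha⟩
    omega
  | succ n ih =>
    rintro K hcard ⟨a, ha, hax⟩
    by_cases hK : K.faces = {{a}}
    · have hKeq : K = pt a := Cplx.ext' (by rw [hK, pt_faces])
      exact ⟨a, by rw [hKeq]; exact Relation.ReflTransGen.refl⟩
    · obtain ⟨σ, hσ, hσne⟩ : ∃ σ ∈ K.faces, σ ≠ {a} := by
        by_contra hcon
        push_neg at hcon
        exact hK (Finset.eq_singleton_iff_unique_mem.mpr ⟨ha, hcon⟩)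
      obtain ⟨w, hwσ, hwa⟩ : ∃ w ∈ σ, w ≠ a := by
        by_contra hcon
        push_neg at hcon
        obtain ⟨x, hx⟩ := K.nonempty_of_mem hσ
        exact hσne (Finset.eq_singleton_iff_unique_mem.mpr ⟨hcon x hx ▸ hx, hcon⟩)
      have hw : {w} ∈ K.faces :=
        K.down_closed hσ (Finset.singleton_subset_iff.mpr hwσ) (Finset.singleton_nonempty w)
      have hpair : insert w ({a} : Finset V) = insert a {w} := by ext x; simp [or_comm]
      have hdom : Dominated K w := by
        refine ⟨a, mem_link.mpr ⟨ha, by simp [hwa], by rw [hpair]; exact hax {w} hw⟩, ?_⟩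
        intro τ hτ
        obtain ⟨hτf, hwτ, hτins⟩ := mem_link.mp hτ
        refine mem_link.mpr ⟨hax τ hτf, by simp [Finset.mem_insert, hwa, hwτ], ?_⟩
        have h2 := hax (insert w τ) hτins
        rwa [Finset.insert_comm] at h2
      have hconeDel : IsCone (delete K w).faces := by
        refine ⟨a, ?_, ?_⟩
        · rw [delete_faces, Finset.mem_filter]
          exact ⟨ha, by simp [hwa]⟩
        · intro τ hτ
          rw [delete_faces, Finset.mem_filter] at hτ ⊢
          exact ⟨hax τ hτ.1, by simp [Finset.mem_insert, hwa, hτ.2]⟩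
      have hcard' : (delete K w).faces.card ≤ n := by
        have := Finset.card_lt_card (delete_faces_ssubset hw)
        omega
      obtain ⟨x, hx⟩ := ih (delete K w) hcard' hconeDel
      exact ⟨x, Relation.ReflTransGen.head ⟨w, hdom, rfl⟩ hx⟩

lemma cone_strongCollapsible {K : Cplx V} (h : IsCone K.faces) : StrongCollapsible K :=
  cone_strongCollapsible_aux K.faces.card K le_rfl h

lemma image_inl_mem_joinFaces {K : Cplx V} {L : Cplx W} {σ : Finset V} (h : σ ∈ K.faces) :
    σ.image Sum.inl ∈ joinFaces K L := by
  refine mem_joinFaces.mpr ⟨(K.nonempty_of_mem h).image _, ?_, ?_⟩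
  · rw [lefts_image_inl]; exact Finset.mem_insert_of_mem h
  · rw [rights_image_inl]; exact Finset.mem_insert_self _ _

lemma image_inr_mem_joinFaces {K : Cplx V} {L : Cplx W} {τ : Finset W} (h : τ ∈ L.faces) :
    τ.image Sum.inr ∈ joinFaces K L := by
  refine mem_joinFaces.mpr ⟨(L.nonempty_of_mem h).image _, ?_, ?_⟩
  · rw [lefts_image_inr]; exact Finset.mem_insert_self _ _
  · rw [rights_image_inr]; exact Finset.mem_insert_of_mem h

lemma strongCollapses_join_left {K K' : Cplx V} (L : Cplx W) (h : StrongCollapses K K') :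
    StrongCollapses (join K L) (join K' L) := by
  refine Relation.ReflTransGen.lift (fun M => join M L) ?_ _ _ h
  rintro A B ⟨v, hdom, rfl⟩
  exact ⟨Sum.inl v, dominated_join_inl_iff.mpr ⟨vertex_of_dominated hdom, Or.inl hdom⟩,
    (delete_join_inl A L v).symm⟩

lemma strongCollapses_join_right {L L' : Cplx W} (K : Cplx V) (h : StrongCollapses L L') :
    StrongCollapses (join K L) (join K L') := by
  refine Relation.ReflTransGen.lift (fun M => join K M) ?_ _ _ h
  rintro A B ⟨w, hdom, rfl⟩
  exact ⟨Sum.inr w, dominated_join_inr_iff.mpr ⟨vertex_of_dominated hdom, Or.inl hdom⟩,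
    (delete_join_inr K A w).symm⟩

lemma join_pt_left_cone (x : V) (L : Cplx W) : IsCone (join (pt x) L).faces := by
  rw [join_faces]
  refine ⟨Sum.inl x, ?_, ?_⟩
  · refine mem_joinFaces.mpr ⟨Finset.singleton_nonempty _, ?_, ?_⟩
    · rw [lefts_singleton_inl, pt_faces]
      exact Finset.mem_insert_of_mem (Finset.mem_singleton_self _)
    · rw [rights_singleton_inl]; exact Finset.mem_insert_self _ _
  · intro σ hσ
    obtain ⟨hne, hl, hr⟩ := mem_joinFaces.mp hσ
    refine mem_joinFaces.mpr ⟨⟨_, Finset.mem_insert_self _ _⟩, ?_, ?_⟩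
    · rw [lefts_insert_inl, pt_faces]
      rw [pt_faces] at hl
      have : insert x (lefts σ) = {x} := by
        rcases Finset.mem_insert.mp hl with h0 | h0
        · rw [h0]; ext y; simp
        · rw [Finset.mem_singleton] at h0
          rw [h0]; ext y; simp
      rw [this]
      exact Finset.mem_insert_of_mem (Finset.mem_singleton_self _)
    · rw [rights_insert_inl]; exact hr
  
lemma join_pt_right_cone (K : Cplx V) (x : W) : IsCone (join K (pt x)).faces := by
  rw [join_faces]
  refine ⟨Sum.inr x, ?_, ?_⟩
  · refine mem_joinFaces.mpr ⟨Finset.singleton_nonempty _, ?_, ?_⟩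
    · rw [lefts_singleton_inr]; exact Finset.mem_insert_self _ _
    · rw [rights_singleton_inr, pt_faces]
      exact Finset.mem_insert_of_mem (Finset.mem_singleton_self _)
  · intro σ hσ
    obtain ⟨hne, hl, hr⟩ := mem_joinFaces.mp hσ
    refine mem_joinFaces.mpr ⟨⟨_, Finset.mem_insert_self _ _⟩, ?_, ?_⟩
    · rw [lefts_insert_inr]; exact hl
    · rw [rights_insert_inr, pt_faces]
      rw [pt_faces] at hr
      have : insert x (rights σ) = {x} := by
        rcases Finset.mem_insert.mp hr with h0 | h0
        · rw [h0]; ext y; simp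
        · rw [Finset.mem_singleton] at h0
          rw [h0]; ext y; simp
      rw [this]
      exact Finset.mem_insert_of_mem (Finset.mem_singleton_self _)

/-- The hard direction of statement 5, by induction on the size of the join. -/
lemma join_strongCollapsible_hard : ∀ (n : ℕ) {V W : Type} (K : Cplx V) (L : Cplx W)
    (x : V ⊕ W), K.faces.card + L.faces.card ≤ n → StrongCollapses (join K L) (pt x) →
    StrongCollapsible K ∨ StrongCollapsible L := by
  intro n
  induction n using Nat.strong_induction_on with
  | _ n ih =>
  intro V W K L x hcard h
  rcases h.cases_head with heq | ⟨M, ⟨u, domu, hM⟩, hrest⟩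
  · have hfaces : joinFaces K L = {{x}} := by
      have := congrArg Cplx.faces heq
      rwa [join_faces, pt_faces] at this
    cases x with
    | inl v =>
      left
      have hx : ({Sum.inl v} : Finset (V ⊕ W)) ∈ joinFaces K L := by
        rw [hfaces]; exact Finset.mem_singleton_self _
      obtain ⟨-, hl, -⟩ := mem_joinFaces.mp hx
      rw [lefts_singleton_inl] at hl
      have hvK : {v} ∈ K.faces := mem_insert_empty hl (Finset.singleton_nonempty _)
      have hsub : K.faces ⊆ {{v}} := by
        intro σ hσ
        have h1 := image_inl_mem_joinFaces (L := L) hσ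
        rw [hfaces, Finset.mem_singleton] at h1
        have h2 := congrArg lefts h1
        rw [lefts_image_inl, lefts_singleton_inl] at h2
        rw [Finset.mem_singleton, h2]
      have hKeq : K = pt v := Cplx.ext'
        (by rw [pt_faces]; exact subset_antisymm hsub (Finset.singleton_subset_iff.mpr hvK))
      exact ⟨v, by rw [hKeq]; exact Relation.ReflTransGen.refl⟩
    | inr w =>
      right
      have hx : ({Sum.inr w} : Finset (V ⊕ W)) ∈ joinFaces K L := by
        rw [hfaces]; exact Finset.mem_singleton_self _
      obtain ⟨-, -, hr⟩ := mem_joinFaces.mp hx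
      rw [rights_singleton_inr] at hr
      have hwL : {w} ∈ L.faces := mem_insert_empty hr (Finset.singleton_nonempty _)
      have hsub : L.faces ⊆ {{w}} := by
        intro σ hσ
        have h1 := image_inr_mem_joinFaces (K := K) hσ
        rw [hfaces, Finset.mem_singleton] at h1
        have h2 := congrArg rights h1
        rw [rights_image_inr, rights_singleton_inr] at h2
        rw [Finset.mem_singleton, h2]
      have hLeq : L = pt w := Cplx.ext'
        (by rw [pt_faces]; exact subset_antisymm hsub (Finset.singleton_subset_iff.mpr hwL))
      exact ⟨w, by rw [hLeq]; exact Relation.ReflTransGen.refl⟩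
  · cases u with
    | inl v =>
      obtain ⟨hv, hd | hc⟩ := dominated_join_inl_iff.mp domu
      · rw [delete_join_inl] at hM
        subst hM
        have hlt : (delete K v).faces.card + L.faces.card < n := by
          have := Finset.card_lt_card (delete_faces_ssubset hv)
          omega
        rcases ih _ hlt (delete K v) L x le_rfl hrest with hK' | hL'
        · left
          obtain ⟨y, hy⟩ := hK'
          exact ⟨y, Relation.ReflTransGen.head ⟨v, hd, rfl⟩ hy⟩
        · right; exact hL'
      · right; exact cone_strongCollapsible hc
    | inr w =>
      obtain ⟨hw, hd | hc⟩ := dominated_join_inr_iff.mp domu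
      · rw [delete_join_inr] at hM
        subst hM
        have hlt : K.faces.card + (delete L w).faces.card < n := by
          have := Finset.card_lt_card (delete_faces_ssubset hw)
          omega
        rcases ih _ hlt K (delete L w) x le_rfl hrest with hK' | hL'
        · left; exact hK'
        · right
          obtain ⟨y, hy⟩ := hL'
          exact ⟨y, Relation.ReflTransGen.head ⟨w, hd, rfl⟩ hy⟩
      · left; exact cone_strongCollapsible hc

end Aux

/-- the join `K * L` is strong collapsible iff `K` or `L` is. -/
theorem stmt5 {V W : Type} (K : Cplx V) (L : Cplx W) :
    StrongCollapsible (join K L) ↔ StrongCollapsible K ∨ StrongCollapsible L := by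
  constructor
  · rintro ⟨x, h⟩
    exact join_strongCollapsible_hard (K.faces.card + L.faces.card) K L x le_rfl h
  · rintro (⟨x, h⟩ | ⟨x, h⟩)
    · obtain ⟨y, h2⟩ := cone_strongCollapsible (join_pt_left_cone x L)
      exact ⟨y, (strongCollapses_join_left L h).trans h2⟩
    · obtain ⟨y, h2⟩ := cone_strongCollapsible (join_pt_right_cone K x)
      exact ⟨y, (strongCollapses_join_right K h).trans h2⟩

end StrongHomotopy
end

section
/- Let L be a full subcomplex of a finite simplicial complex K such that every vertex of K that is not in L is dominated by some vertex belonging to L. Then K strong collapses to L. -/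
/- Theory of strong homotopy types of finite simplicial complexes
   (Barmak–Minian), basic definitions. -/

open Classical

namespace StrongHomotopy

variable {V W : Type}

lemma cplx_ext {V : Type} {K K' : Cplx V} (h : K.faces = K'.faces) : K = K' := by
  cases K; cases K'; simp_all

lemma notMem_of_not_vertex {V : Type} {L : Cplx V} {v : V} (h : ¬ IsVertex L v)
    {σ : Finset V} (hσ : σ ∈ L.faces) : v ∉ σ := fun hv =>
  h (L.down_closed hσ (Finset.singleton_subset_iff.mpr hv) ⟨v, Finset.mem_singleton_self v⟩)

lemma mem_link_iff {V : Type} {K : Cplx V} {v : V} {σ : Finset V} :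
    σ ∈ link K v ↔ σ ∈ K.faces ∧ v ∉ σ ∧ insert v σ ∈ K.faces := by
  simp [link, and_assoc]

lemma dominatedBy_delete {V : Type} {K : Cplx V} {u u' v : V}
    (hd : DominatedBy K u u') (huv : u ≠ v) (hu'v : u' ≠ v) :
    DominatedBy (delete K v) u u' := by
  obtain ⟨h1, h2⟩ := hd
  constructor
  · rw [mem_link_iff] at h1 ⊢
    simp only [delete, Finset.mem_filter]
    refine ⟨⟨h1.1, ?_⟩, h1.2.1, h1.2.2, ?_⟩ <;>
      simp [Finset.mem_insert, huv.symm, hu'v.symm, Ne.symm]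
  · intro σ hσ
    rw [mem_link_iff] at hσ ⊢
    simp only [delete, Finset.mem_filter] at hσ ⊢
    obtain ⟨⟨hσK, hvσ⟩, huσ, huins, hvins⟩ := hσ
    have h2' := h2 σ (mem_link_iff.mpr ⟨hσK, huσ, huins⟩)
    rw [mem_link_iff] at h2'
    refine ⟨⟨h2'.1, ?_⟩, h2'.2.1, h2'.2.2, ?_⟩ <;>
      simp [Finset.mem_insert, huv.symm, hu'v.symm, hvσ, Ne.symm]

/-- if `L` is a full subcomplex of `K` and every vertex of `K` not in
`L` is dominated by some vertex of `L`, then `K` strong collapses to `L`. -/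
theorem stmt6 {V : Type} (K L : Cplx V) (hfull : IsFullSub L K)
    (hdom : ∀ v, IsVertex K v → ¬ IsVertex L v →
      ∃ v', IsVertex L v' ∧ DominatedBy K v v') :
    StrongCollapses K L := by
  suffices H : ∀ n (K : Cplx V), K.faces.card ≤ n → IsFullSub L K →
      (∀ v, IsVertex K v → ¬ IsVertex L v →
        ∃ v', IsVertex L v' ∧ DominatedBy K v v') →
      StrongCollapses K L from H K.faces.card K le_rfl hfull hdom
  clear hfull hdom K
  intro n
  induction n with
  | zero =>
    intro K hc hfull _
    have hK : K.faces = ∅ := Finset.card_eq_zero.mp (Nat.le_zero.mp hc)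
    have hL : L.faces = ∅ := Finset.subset_empty.mp (hK ▸ hfull.1)
    rw [cplx_ext (hK.trans hL.symm)]; exact Relation.ReflTransGen.refl
  | succ n ih =>
    intro K hc hfull hdom
    by_cases hex : ∃ v, IsVertex K v ∧ ¬ IsVertex L v
    · obtain ⟨v, hvK, hvL⟩ := hex
      obtain ⟨v', hv'L, hdomv⟩ := hdom v hvK hvL
      have hstep : ElemStrongCollapse K (delete K v) := ⟨v, ⟨v', hdomv⟩, rfl⟩
      have hvv' : v' ≠ v := fun h => hvL (h ▸ hv'L)
      have hcard : (delete K v).faces.card ≤ n := by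
        have hss : (delete K v).faces ⊂ K.faces := by
          refine Finset.ssubset_iff_of_subset (Finset.filter_subset _ _) |>.mpr
            ⟨{v}, hvK, ?_⟩
          simp [delete]
        have := Finset.card_lt_card hss
        omega
      have hfull' : IsFullSub L (delete K v) := by
        constructor
        · intro σ hσ
          simp only [delete, Finset.mem_filter]
          exact ⟨hfull.1 hσ, notMem_of_not_vertex hvL hσ⟩
        · intro σ hσ hv
          exact hfull.2 σ (Finset.mem_filter.mp hσ).1 hv
      have hdom' : ∀ u, IsVertex (delete K u) u → True := fun _ _ => trivial
      refine Relation.ReflTransGen.head hstep (ih (delete K v) hcard hfull' ?_)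
      intro u huK' huL
      have huK : IsVertex K u ∧ v ∉ ({u} : Finset V) :=
        Finset.mem_filter.mp huK'
      have huv : u ≠ v := by
        intro h; exact huK.2 (by simp [h])
      obtain ⟨u', hu'L, hduu'⟩ := hdom u huK.1 huL
      have hu'v : u' ≠ v := fun h => hvL (h ▸ hu'L)
      exact ⟨u', hu'L, dominatedBy_delete hduu' huv hu'v⟩
    · push_neg at hex
      have hKL : K.faces ⊆ L.faces := by
        intro σ hσ
        refine hfull.2 σ hσ fun u hu => hex u ?_
        exact K.down_closed hσ (Finset.singleton_subset_iff.mpr hu)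
          ⟨u, Finset.mem_singleton_self u⟩
      rw [cplx_ext (Finset.Subset.antisymm hKL hfull.1)]; exact Relation.ReflTransGen.refl

end StrongHomotopy
end
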